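/- arXiv:math/0612535 — 4 statements merged into one kernel-verified Lean document; each statement's English description precedes it below -/
import Mathlib

section
/- For any linear code C over F_q of length N, the weight enumerator of the dual code satisfies W_{C^⊥}(x,y) = (1/|C|) · W_C(x + (q-1)y, x - y) (the MacWilliams identity). -/
open Finset

/-- Hamming weight of a vector. -/
def wt {F : Type*} [Zero F] [DecidableEq F] {N : ℕ} (c : Fin N → F) : ℕ :=
  (univ.filter fun i => c i ≠ 0).card

/-- Weight enumerator of a (finite) code, evaluated at `x, y : ℂ`. -/
noncomputable def Wenum {F : Type*} [Zero F] [DecidableEq F] {N : ℕ}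
    (C : Finset (Fin N → F)) (x y : ℂ) : ℂ :=
  ∑ c ∈ C, x ^ (N - wt c) * y ^ (wt c)

/-- The dual code, with respect to the standard bilinear form. -/
def dualCode {F : Type*} [CommRing F] [DecidableEq F] [Fintype F] {N : ℕ}
    (C : Finset (Fin N → F)) : Finset (Fin N → F) :=
  univ.filter fun u => ∀ c ∈ C, ∑ i, u i * c i = 0

lemma mw_addChar_map_sum {ι A M : Type*} [AddCommMonoid A] [CommMonoid M]
    (χ : AddChar A M) (s : Finset ι) (f : ι → A) :
    χ (∑ i ∈ s, f i) = ∏ i ∈ s, χ (f i) := by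
  classical
  induction s using Finset.cons_induction with
  | empty => simp
  | cons a s has ih => rw [Finset.sum_cons, Finset.prod_cons, AddChar.map_add_eq_mul, ih]

lemma mw_prod_ite {F : Type*} [Zero F] [DecidableEq F] {N : ℕ} (x y : ℂ) (u : Fin N → F) :
    (∏ i, (if u i = 0 then x else y)) = x ^ (N - wt u) * y ^ (wt u) := by
  rw [Finset.prod_ite, Finset.prod_const, Finset.prod_const]
  congr 2
  · have h : (univ.filter fun i => u i = 0) = univ \ (univ.filter fun i => u i ≠ 0) := by
      rw [← Finset.filter_not]
      simp
    rw [h, Finset.card_sdiff_of_subset (Finset.filter_subset _ _), Finset.card_univ, Fintype.card_fin]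
    rfl

lemma mw_gauss {F : Type*} [Field F] [Fintype F] [DecidableEq F]
    (χ : AddChar F ℂ) (hχ : χ ≠ 0) (x y : ℂ) (t : F) :
    ∑ a : F, (if a = 0 then x else y) * χ (a * t)
      = if t = 0 then x + ((Fintype.card F : ℂ) - 1) * y else x - y := by
  have hsum : ∑ a : F, χ a = 0 := AddChar.sum_eq_zero_iff_ne_zero.mpr hχ
  split_ifs with ht
  · subst ht
    simp only [mul_zero, AddChar.map_zero_eq_one, mul_one]
    rw [Finset.sum_ite, Finset.sum_const, Finset.sum_const]
    have h1 : (univ.filter fun a : F => a = 0) = {(0 : F)} := by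
      ext a; simp
    have h2 : (univ.filter fun a : F => ¬ a = 0).card = Fintype.card F - 1 := by
      rw [Finset.filter_not, Finset.card_sdiff_of_subset (Finset.filter_subset _ _), Finset.card_univ, h1,
        Finset.card_singleton]
    rw [h1, h2]
    have hq : 1 ≤ Fintype.card F := Fintype.card_pos
    simp only [Finset.card_singleton, one_smul, nsmul_eq_mul]
    try rw [Nat.cast_sub hq, Nat.cast_one]
    try ring
  · have hmul : ∑ a : F, χ (a * t) = 0 := by
      rw [← hsum]
      exact Fintype.sum_equiv (Equiv.mulRight₀ t ht) _ _ (fun a => rfl)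
    rw [← Finset.add_sum_erase _ _ (Finset.mem_univ (0 : F))]
    have h3 : ∑ a ∈ univ.erase (0 : F), (if a = 0 then x else y) * χ (a * t)
        = y * ∑ a ∈ univ.erase (0 : F), χ (a * t) := by
      rw [Finset.mul_sum]
      refine Finset.sum_congr rfl fun a ha => ?_
      rw [if_neg (Finset.mem_erase.mp ha).1]
    have h4 : ∑ a ∈ univ.erase (0 : F), χ (a * t) = -1 := by
      have := Finset.add_sum_erase _ (fun a : F => χ (a * t)) (Finset.mem_univ (0 : F))
      rw [hmul] at this
      simp only [zero_mul, AddChar.map_zero_eq_one] at this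
      linear_combination this
    rw [h3, h4]
    simp
    ring

lemma mw_code_sum {F : Type*} [Field F] [Fintype F] [DecidableEq F] {N : ℕ}
    (C : Finset (Fin N → F)) (M : Submodule F (Fin N → F)) (hC : ∀ v, v ∈ C ↔ v ∈ M)
    (χ : AddChar F ℂ) (hχ1 : χ 1 ≠ 1) (u : Fin N → F) :
    ∑ c ∈ C, χ (∑ i, u i * c i)
      = if (∀ c ∈ C, ∑ i, u i * c i = 0) then (C.card : ℂ) else 0 := by
  split_ifs with h
  · rw [Finset.sum_congr rfl fun c hc => by rw [h c hc, AddChar.map_zero_eq_one]]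
    simp
  · push_neg at h
    obtain ⟨c0, hc0C, hs⟩ := h
    set s : F := ∑ i, u i * c0 i with hsdef
    set c1 : Fin N → F := s⁻¹ • c0 with hc1def
    have hc1M : c1 ∈ M := M.smul_mem _ ((hC c0).1 hc0C)
    have hip : ∑ i, u i * c1 i = 1 := by
      have : ∑ i, u i * c1 i = s⁻¹ * ∑ i, u i * c0 i := by
        rw [Finset.mul_sum]
        refine Finset.sum_congr rfl fun i _ => ?_
        simp [hc1def, Pi.smul_apply, smul_eq_mul]
        ring
      rw [this, ← hsdef, inv_mul_cancel₀ hs]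
    refine eq_zero_of_mul_eq_self_left hχ1 ?_
    rw [Finset.mul_sum]
    refine Finset.sum_nbij' (fun c => c + c1) (fun c => c - c1) ?_ ?_ ?_ ?_ ?_
    · intro c hc
      exact (hC _).2 (M.add_mem ((hC c).1 hc) hc1M)
    · intro c hc
      exact (hC _).2 (M.sub_mem ((hC c).1 hc) hc1M)
    · intro c _; simp
    · intro c _; simp
    · intro c _
      rw [← AddChar.map_add_eq_mul]
      congr 1
      rw [← hip, ← Finset.sum_add_distrib]
      refine Finset.sum_congr rfl fun i _ => ?_
      simp only [Pi.add_apply, mul_add]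
      ring

/-- The MacWilliams identity: for a linear code `C` over a finite field `F` (with
`q = |F|`), `W_{C^⊥}(x,y) = (1/|C|) · W_C(x + (q-1)y, x - y)`. -/
theorem macwilliams_identity {F : Type*} [Field F] [Fintype F] [DecidableEq F] {N : ℕ}
    (C : Finset (Fin N → F)) (M : Submodule F (Fin N → F)) (hC : ∀ v, v ∈ C ↔ v ∈ M)
    (x y : ℂ) :
    Wenum (dualCode C) x y =
      (C.card : ℂ)⁻¹ * Wenum C (x + ((Fintype.card F : ℂ) - 1) * y) (x - y) := by
  classical
  obtain ⟨χ, hχ1⟩ := AddChar.exists_apply_ne_zero.mpr (one_ne_zero : (1 : F) ≠ 0)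
  have hχ0 : χ ≠ 0 := fun h => hχ1 (by simp [h])
  have h0C : (0 : Fin N → F) ∈ C := (hC 0).2 M.zero_mem
  have hcard : (C.card : ℂ) ≠ 0 :=
    Nat.cast_ne_zero.mpr (Finset.card_ne_zero_of_mem h0C)
  -- the double sum
  have key : ∑ c ∈ C, ∑ u : Fin N → F,
      (x ^ (N - wt u) * y ^ (wt u)) * χ (∑ i, u i * c i)
      = (C.card : ℂ) * Wenum (dualCode C) x y := by
    rw [Finset.sum_comm]
    have step : ∀ u : Fin N → F,
        ∑ c ∈ C, (x ^ (N - wt u) * y ^ (wt u)) * χ (∑ i, u i * c i)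
        = if (∀ c ∈ C, ∑ i, u i * c i = 0)
            then (x ^ (N - wt u) * y ^ (wt u)) * (C.card : ℂ) else 0 := by
      intro u
      rw [← Finset.mul_sum, mw_code_sum C M hC χ hχ1 u]
      split_ifs <;> simp
    rw [Finset.sum_congr rfl fun u _ => step u]
    rw [← Finset.sum_filter]
    have hdual : (univ.filter fun u : Fin N → F => ∀ c ∈ C, ∑ i, u i * c i = 0) = dualCode C := by
      unfold dualCode
      exact Finset.filter_congr_decidable _ _ _
    rw [hdual, Wenum, Finset.mul_sum]
    exact Finset.sum_congr rfl fun u _ => mul_comm _ _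
  have key2 : ∀ c : Fin N → F,
      ∑ u : Fin N → F, (x ^ (N - wt u) * y ^ (wt u)) * χ (∑ i, u i * c i)
      = (x + ((Fintype.card F : ℂ) - 1) * y) ^ (N - wt c) * (x - y) ^ (wt c) := by
    intro c
    have h1 : ∀ u : Fin N → F,
        (x ^ (N - wt u) * y ^ (wt u)) * χ (∑ i, u i * c i)
        = ∏ i, ((if u i = 0 then x else y) * χ (u i * c i)) := by
      intro u
      rw [Finset.prod_mul_distrib, mw_prod_ite, ← mw_addChar_map_sum]
    rw [Finset.sum_congr rfl fun u _ => h1 u]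
    rw [← Fintype.prod_sum fun i (a : F) => (if a = 0 then x else y) * χ (a * c i)]
    rw [Finset.prod_congr rfl fun i _ => mw_gauss χ hχ0 x y (c i)]
    exact mw_prod_ite _ _ c
  have final : (C.card : ℂ) * Wenum (dualCode C) x y
      = Wenum C (x + ((Fintype.card F : ℂ) - 1) * y) (x - y) := by
    rw [← key, Wenum]
    exact Finset.sum_congr rfl fun c _ => key2 c
  rw [← final, inv_mul_cancel_left₀ hcard]
end

section
/- If C is a binary self-dual code of length N in which every weight is divisible by 4 (Type II), then N is divisible by 8. -/
open Finset

/-!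
Evaluate the MacWilliams identity `|C| W_{C^⊥}(x, y) = W_C(x + y, x - y)` at `(x, y) = (1, i)`.
For a doubly even code, `W_C(x, ζ y) = W_C(x, y)` whenever `ζ⁴ = 1`; with `1 - i = -i (1 + i)`
this gives `W_C(1 + i, 1 - i) = |C| (1 + i)^N` and `W_C(1, i) = |C|`, so self-duality yields
`(1 + i)^N = |C|`. Comparing with the conjugate and `1 + i = i (1 - i)` gives `i^N = 1`, and then
`(1 + i)^N = (-4)^{N/4}` is positive only when `N/4` is even.
-/

open Complex

lemma AddChar.map_sum_eq_prod {ι A M : Type*} [AddCommMonoid A] [CommMonoid M]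
    (ψ : AddChar A M) (s : Finset ι) (f : ι → A) : ψ (∑ i ∈ s, f i) = ∏ i ∈ s, ψ (f i) := by
  induction s using Finset.cons_induction with
  | empty => simp
  | cons a s ha ih => rw [sum_cons, prod_cons, ψ.map_add_eq_mul, ih]

noncomputable def signChar : AddChar (ZMod 2) ℂ := AddChar.zmodChar 2 neg_one_sq

@[simp] lemma signChar_one : signChar 1 = -1 := by
  rw [signChar, AddChar.zmodChar_apply, ZMod.val_one, pow_one]

section Weight

variable {F : Type*} [Zero F] [DecidableEq F] {N : ℕ}

lemma wt_le (c : Fin N → F) : wt c ≤ N :=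
  (card_filter_le _ _).trans_eq (card_fin N)

lemma prod_ite_eq_zero_eq_pow_mul_pow {M : Type*} [CommMonoid M] (c : Fin N → F) (a b : M) :
    ∏ i, (if c i = 0 then a else b) = a ^ (N - wt c) * b ^ wt c := by
  have h := card_filter_add_card_filter_not (s := univ) (fun i => c i = 0)
  rw [card_univ, Fintype.card_fin] at h
  rw [prod_ite, prod_const, prod_const, wt]
  simp only [ne_eq]
  congr 2
  omega

end Weight

section DualCode

variable {F : Type*} [CommRing F] [DecidableEq F] [Fintype F] {N : ℕ} {C : Finset (Fin N → F)}

lemma mem_dualCode {u : Fin N → F} : u ∈ dualCode C ↔ ∀ c ∈ C, u ⬝ᵥ c = 0 := by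
  simp [dualCode, dotProduct]

lemma zero_mem_dualCode : (0 : Fin N → F) ∈ dualCode C :=
  mem_dualCode.2 fun c _ => zero_dotProduct c

lemma add_mem_dualCode {u v : Fin N → F} (hu : u ∈ dualCode C) (hv : v ∈ dualCode C) :
    u + v ∈ dualCode C :=
  mem_dualCode.2 fun c hc => by
    rw [add_dotProduct, mem_dualCode.1 hu c hc, mem_dualCode.1 hv c hc, add_zero]

end DualCode

section MacWilliams

variable {N : ℕ} {C : Finset (Fin N → ZMod 2)}

lemma sum_signChar_dotProduct (hC : ∀ a ∈ C, ∀ b ∈ C, a + b ∈ C) (u : Fin N → ZMod 2) :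
    ∑ c ∈ C, signChar (u ⬝ᵥ c) = if u ∈ dualCode C then (C.card : ℂ) else 0 := by
  split_ifs with hu
  · rw [sum_congr rfl fun c hc => by rw [mem_dualCode.1 hu c hc, AddChar.map_zero_eq_one],
      sum_const, nsmul_one]
  · obtain ⟨c₀, hc₀, hu₀⟩ : ∃ c₀ ∈ C, u ⬝ᵥ c₀ ≠ 0 := by simpa [mem_dualCode] using hu
    have hone : u ⬝ᵥ c₀ = 1 := Fin.eq_one_of_ne_zero _ hu₀
    have htrans : ∑ c ∈ C, signChar (u ⬝ᵥ (c + c₀)) = ∑ c ∈ C, signChar (u ⬝ᵥ c) :=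
      sum_nbij' (· + c₀) (· + c₀) (fun c hc => hC c hc c₀ hc₀) (fun c hc => hC c hc c₀ hc₀)
        (fun c _ => by ext i; exact CharTwo.add_cancel_right (c i) (c₀ i))
        (fun c _ => by ext i; exact CharTwo.add_cancel_right (c i) (c₀ i))
        (fun c _ => by simp)
    simp only [dotProduct_add, AddChar.map_add_eq_mul, hone, signChar_one, mul_neg_one,
      sum_neg_distrib] at htrans
    linear_combination -htrans / 2

lemma sum_weight_monomial_mul_signChar (c : Fin N → ZMod 2) (x y : ℂ) :
    ∑ u : Fin N → ZMod 2, x ^ (N - wt u) * y ^ wt u * signChar (u ⬝ᵥ c) =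
      (x + y) ^ (N - wt c) * (x - y) ^ wt c := by
  have hcoord (b : ZMod 2) :
      ∑ a : ZMod 2, (if a = 0 then x else y) * signChar (a * b) = if b = 0 then x + y else x - y := by
    rw [show (univ : Finset (ZMod 2)) = {0, 1} from rfl, sum_pair zero_ne_one]
    obtain rfl | rfl : b = 0 ∨ b = 1 := by decide +revert
    · simp
    · simp [sub_eq_add_neg]
  calc ∑ u : Fin N → ZMod 2, x ^ (N - wt u) * y ^ wt u * signChar (u ⬝ᵥ c)
      = ∑ u : Fin N → ZMod 2, ∏ i, (if u i = 0 then x else y) * signChar (u i * c i) := by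
        simp only [prod_mul_distrib, prod_ite_eq_zero_eq_pow_mul_pow, dotProduct,
          AddChar.map_sum_eq_prod]
    _ = ∏ i, ∑ a : ZMod 2, (if a = 0 then x else y) * signChar (a * c i) :=
        (Fintype.prod_sum fun i (a : ZMod 2) => (if a = 0 then x else y) * signChar (a * c i)).symm
    _ = (x + y) ^ (N - wt c) * (x - y) ^ wt c := by
        simp only [hcoord, prod_ite_eq_zero_eq_pow_mul_pow]

theorem Wenum_add_sub (hC : ∀ a ∈ C, ∀ b ∈ C, a + b ∈ C) (x y : ℂ) :
    Wenum C (x + y) (x - y) = C.card * Wenum (dualCode C) x y := by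
  calc Wenum C (x + y) (x - y)
      = ∑ c ∈ C, ∑ u, x ^ (N - wt u) * y ^ wt u * signChar (u ⬝ᵥ c) := by
        simp only [Wenum, sum_weight_monomial_mul_signChar]
    _ = ∑ u, x ^ (N - wt u) * y ^ wt u * ∑ c ∈ C, signChar (u ⬝ᵥ c) := by
        rw [sum_comm]; simp only [mul_sum]
    _ = C.card * Wenum (dualCode C) x y := by
        simp only [sum_signChar_dotProduct hC, mul_ite, mul_zero]
        rw [sum_ite_mem, univ_inter, Wenum, mul_sum]
        exact sum_congr rfl fun _ _ => mul_comm _ _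

end MacWilliams

section DoublyEven

variable {F : Type*} [Zero F] [DecidableEq F] {N : ℕ}

lemma Wenum_self (C : Finset (Fin N → F)) (x : ℂ) : Wenum C x x = C.card * x ^ N := by
  rw [Wenum, sum_congr rfl fun c _ => by rw [← pow_add, Nat.sub_add_cancel (wt_le c)],
    sum_const, nsmul_eq_mul]

lemma Wenum_mul_right_of_four_dvd_wt {C : Finset (Fin N → F)} (hC : ∀ c ∈ C, 4 ∣ wt c) {ζ : ℂ}
    (hζ : ζ ^ 4 = 1) (x y : ℂ) : Wenum C x (ζ * y) = Wenum C x y :=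
  sum_congr rfl fun c hc => by
    obtain ⟨k, hk⟩ := hC c hc
    rw [mul_pow, hk, pow_mul ζ, hζ, one_pow, one_mul]

end DoublyEven

lemma one_add_I_pow_four : (1 + I) ^ 4 = -4 := by
  have hsq : (1 + I) ^ 2 = 2 * I := by linear_combination I_sq
  rw [show 4 = 2 * 2 from rfl, pow_mul, hsq]
  linear_combination 4 * I_sq

lemma eight_dvd_of_one_add_I_pow_eq_natCast {N n : ℕ} (h : (1 + I) ^ N = n) : 8 ∣ N := by
  have hn : (n : ℂ) ≠ 0 := h ▸ pow_ne_zero N fun h0 => by simpa using congrArg re h0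
  have hconj : (1 - I) ^ N = n := by
    simpa [sub_eq_add_neg] using congrArg (starRingEnd ℂ) h
  have hI : (1 - I) ^ N * I ^ N = (1 - I) ^ N * 1 := by
    rw [← mul_pow, show (1 - I) * I = 1 + I by linear_combination -I_sq, h, hconj, mul_one]
  obtain ⟨k, rfl⟩ : 4 ∣ N :=
    isPrimitiveRoot_I.pow_eq_one_iff_dvd N |>.1 (mul_left_cancel₀ (hconj ▸ hn) hI)
  rw [pow_mul, one_add_I_pow_four] at h
  rcases Nat.even_or_odd k with hk | hk
  · exact Nat.mul_dvd_mul_left 4 (even_iff_two_dvd.1 hk)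
  · rw [hk.neg_pow] at h
    have : -(4 : ℤ) ^ k = n := by exact_mod_cast h
    linarith [pow_pos (four_pos : (0 : ℤ) < 4) k, Int.natCast_nonneg n]

theorem typeII_length_div_eight_general {N : ℕ}
    (C : Finset (Fin N → ZMod 2))
    (hsd : dualCode C = C)
    (hII : ∀ c ∈ C, 4 ∣ wt c) :
    8 ∣ N := by
  have hadd : ∀ a ∈ C, ∀ b ∈ C, a + b ∈ C := by
    rw [← hsd]
    exact fun a ha b hb => add_mem_dualCode ha hb
  have hcard : (C.card : ℂ) ≠ 0 :=
    Nat.cast_ne_zero.2 (card_ne_zero_of_mem (hsd ▸ zero_mem_dualCode))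
  have key : (C.card : ℂ) * (1 + I) ^ N = C.card * C.card :=
    calc (C.card : ℂ) * (1 + I) ^ N
        = Wenum C (1 + I) (1 + I) := (Wenum_self C _).symm
      _ = Wenum C (1 + I) (1 - I) := by
        rw [show 1 - I = -I * (1 + I) by linear_combination I_sq,
          Wenum_mul_right_of_four_dvd_wt hII (by rw [Even.neg_pow (by decide), I_pow_four])]
      _ = C.card * Wenum C 1 I := by rw [Wenum_add_sub hadd, hsd]
      _ = C.card * C.card := by
        rw [← mul_one I, Wenum_mul_right_of_four_dvd_wt hII I_pow_four, Wenum_self, one_pow, mul_one]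
  exact eight_dvd_of_one_add_I_pow_eq_natCast (mul_left_cancel₀ hcard key)

/-- The length of a Type II (doubly even self-dual) binary code is divisible by 8. -/
theorem typeII_length_div_eight {N : ℕ}
    (C : Finset (Fin N → ZMod 2)) (M : Submodule (ZMod 2) (Fin N → ZMod 2))
    (hC : ∀ v, v ∈ C ↔ v ∈ M) (hsd : dualCode C = C)
    (hII : ∀ c ∈ C, 4 ∣ wt c) :
    8 ∣ N :=
  typeII_length_div_eight_general C hsd hII
end

section
/- The real matrix group generated by (1/√2)·[[1,1],[1,−1]] and diag(1, −1) is finite of order 16 (the dihedral group of order 16), and its ring of polynomial invariants is generated by x² + y² and x²y²(x² − y²)². -/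
open MvPolynomial

/-- The action of a 2×2 matrix on polynomials in two variables by linear substitution
of the variables: `(matAct M p)(x) = p(M x)`. -/
noncomputable def matAct (M : Matrix (Fin 2) (Fin 2) ℝ)
    (p : MvPolynomial (Fin 2) ℝ) : MvPolynomial (Fin 2) ℝ :=
  aeval (fun i => ∑ j, C (M i j) * X j) p

/-!
Put `R = AB`. Both generators are reflections (square `1`, determinant `-1`), so `⟨R⟩` has index
two in the group they generate, and `R`, the rotation by `π/4`, has order `8`.

Invariance under `B`, under the swap `ABA` and under `x ↦ -x` (conjugate to `B` by the swap) makes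
an invariant an even symmetric polynomial, i.e. a polynomial `r(s, t)` in `s = x² + y²` and
`t = x²y²`. On `(s, t)` the matrix `A` acts as the involution `(s, t) ↦ (s, s²/4 - t)`; averaging
over it we may take `r` invariant, and since in the coordinate `u = t - s²/8` the involution is
`u ↦ -u`, `r` is a polynomial in `s` and `u² = s⁴/64 - x²y²(x² - y²)²/4`.
-/

section Substitution

variable {σ τ υ R : Type*} [CommRing R]

lemma aeval_aeval (f : τ → MvPolynomial υ R) (g : σ → MvPolynomial τ R) (p : MvPolynomial σ R) :
    aeval f (aeval g p) = aeval (fun i => aeval f (g i)) p := by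
  rw [aeval_eq_bind₁ g, aeval_bind₁]

lemma aeval_C_mul_X_monomial (d : σ → R) (n : σ →₀ ℕ) (a : R) :
    aeval (fun i => C (d i) * X i) (monomial n a) =
      monomial n ((n.prod fun i e => d i ^ e) * a) := by
  rw [aeval_monomial, monomial_eq, C_mul, algebraMap_eq]
  simp only [mul_pow, Finsupp.prod_mul, ← map_pow, ← map_finsuppProd]
  ring

lemma coeff_aeval_C_mul_X (d : σ → R) (p : MvPolynomial σ R) (m : σ →₀ ℕ) :
    coeff m (aeval (fun i => C (d i) * X i) p) = (m.prod fun i e => d i ^ e) * coeff m p := by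
  classical
  induction p using MvPolynomial.induction_on' with
  | monomial n a =>
    rw [aeval_C_mul_X_monomial, coeff_monomial, coeff_monomial]
    split_ifs with h <;> simp [h]
  | add p q hp hq => simp only [map_add, coeff_add, hp, hq, mul_add]

lemma prod_pow_eq_one_of_aeval_C_mul_X_eq_self [NoZeroDivisors R] {d : σ → R}
    {p : MvPolynomial σ R} (h : aeval (fun i => C (d i) * X i) p = p) {m : σ →₀ ℕ}
    (hm : m ∈ p.support) : (m.prod fun i e => d i ^ e) = 1 := by
  have := coeff_aeval_C_mul_X d p m
  rwa [h, eq_comm, mul_eq_right₀ (mem_support_iff.1 hm)] at this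

lemma exists_aeval_X_pow_eq (k : σ → ℕ) (p : MvPolynomial σ R)
    (h : ∀ m ∈ p.support, ∀ i, k i ∣ m i) :
    ∃ q : MvPolynomial σ R, aeval (fun i => X i ^ k i) q = p := by
  classical
  let div (m : σ →₀ ℕ) : σ →₀ ℕ :=
    Finsupp.onFinset m.support (fun i => m i / k i) fun i hi => by
      rw [Finsupp.mem_support_iff]; rintro hm; simp [hm] at hi
  refine ⟨∑ m ∈ p.support, monomial (div m) (coeff m p), ?_⟩
  conv_rhs => rw [p.as_sum]
  rw [map_sum]
  refine Finset.sum_congr rfl fun m hm => ?_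
  rw [aeval_monomial, monomial_eq, algebraMap_eq,
    Finsupp.prod_of_support_subset _ (Finsupp.support_onFinset_subset) _ (fun _ _ => pow_zero _),
    Finsupp.prod_of_support_subset _ subset_rfl _ (fun _ _ => pow_zero _)]
  congr 1
  refine Finset.prod_congr rfl fun i _ => ?_
  rw [Finsupp.onFinset_apply, ← pow_mul, Nat.mul_div_cancel' (h m hm i)]

lemma exists_eq_and_fixed_of_involutive {S M N : Type*} [CommRing S] [Invertible (2 : S)]
    [AddCommGroup M] [Module S M] [AddCommGroup N] [Module S N]
    (f : M →ₗ[S] N) (g : M →ₗ[S] M) (hg : Function.Involutive g) {x : M} (hx : f (g x) = f x) :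
    ∃ y, f y = f x ∧ g y = y :=
  ⟨⅟(2 : S) • (x + g x), by
    rw [f.map_smul, map_add, hx, ← two_smul S, smul_smul, invOf_mul_self, one_smul],
    by rw [g.map_smul, map_add, hg, add_comm]⟩

lemma even_of_aeval_update_neg_X_eq_self [DecidableEq σ] [NoZeroDivisors R] (hR : (-1 : R) ≠ 1)
    {p : MvPolynomial σ R} {i : σ} (h : aeval (Function.update X i (-X i)) p = p)
    {m : σ →₀ ℕ} (hm : m ∈ p.support) : Even (m i) := by
  have hscale :
      Function.update X i (-X i) = fun j => C (Function.update (1 : σ → R) i (-1) j) * X j := by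
    funext j
    rcases eq_or_ne j i with rfl | hj <;> simp [*]
  rw [hscale] at h
  have := prod_pow_eq_one_of_aeval_C_mul_X_eq_self h hm
  rwa [Finsupp.prod_eq_single i (fun j _ hj => by simp [hj]) (fun _ => by simp),
    Function.update_self, neg_one_pow_eq_one_iff_even hR] at this

lemma aeval_mem_of_forall_mem {A : Type*} [CommRing A] [Algebra R A] {S : Subalgebra R A}
    {F : σ → A} (hF : ∀ i, F i ∈ S) (p : MvPolynomial σ R) : aeval F p ∈ S :=
  Algebra.adjoin_le (Set.range_subset_iff.2 hF)
    (by rw [Algebra.adjoin_range_eq_range_aeval]; exact ⟨p, rfl⟩)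

end Substitution

section TwoVariables

variable {R K : Type*} [CommRing R] [Field K] [CharZero K]

lemma exists_aeval_add_mul_eq_of_aeval_swap_eq {q : MvPolynomial (Fin 2) R}
    (hq : aeval ![X 1, X 0] q = q) :
    ∃ r : MvPolynomial (Fin 2) R, aeval ![X 0 + X 1, X 0 * X 1] r = q := by
  have hsymm : q ∈ symmetricSubalgebra (Fin 2) R := fun e => by
    obtain rfl | rfl : e = 1 ∨ e = Equiv.swap 0 1 := by revert e; decide
    · exact rename_id_apply q
    · rw [rename_eq_aeval]
      convert hq using 3
      funext i
      fin_cases i <;> simp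
  obtain ⟨r, hr⟩ := esymmAlgHom_surjective (n := 2) R le_rfl ⟨q, hsymm⟩
  refine ⟨r, Eq.trans ?_ (congrArg Subtype.val hr)⟩
  rw [esymmAlgHom_apply]
  congr 2
  funext i
  fin_cases i <;> simp [esymm_eq_multiset_esymm, Fin.univ_val_map, ← Multiset.cons_coe]

lemma exists_aeval_sq_add_sq_eq {p : MvPolynomial (Fin 2) K}
    (hx : aeval ![-X 0, X 1] p = p) (hy : aeval ![X 0, -X 1] p = p)
    (hswap : aeval ![X 1, X 0] p = p) :
    ∃ r : MvPolynomial (Fin 2) K, aeval ![X 0 ^ 2 + X 1 ^ 2, X 0 ^ 2 * X 1 ^ 2] r = p := by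
  have heven : ∀ m ∈ p.support, ∀ i, 2 ∣ m i := by
    intro m hm
    refine Fin.forall_fin_two.2 ⟨?_, ?_⟩ <;>
      refine (even_of_aeval_update_neg_X_eq_self (by norm_num) ?_ hm).two_dvd
    · rw [show Function.update X 0 (-X 0) = ![-X 0, X 1] by funext j; fin_cases j <;> simp]
      exact hx
    · rw [show Function.update X 1 (-X 1) = ![X 0, -X 1] by funext j; fin_cases j <;> simp]
      exact hy
  obtain ⟨q, rfl⟩ := exists_aeval_X_pow_eq (fun _ => 2) p heven
  let sq : MvPolynomial (Fin 2) K →ₐ[K] MvPolynomial (Fin 2) K := aeval fun i => X i ^ 2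
  let sw : MvPolynomial (Fin 2) K →ₐ[K] MvPolynomial (Fin 2) K := aeval ![X 1, X 0]
  have hcomm : sq.comp sw = sw.comp sq := algHom_ext fun i => by fin_cases i <;> simp [sq, sw]
  have hinv : Function.Involutive sw := fun q => by
    change sw.comp sw q = AlgHom.id K _ q
    congr 1
    exact algHom_ext fun i => by fin_cases i <;> simp [sw]
  obtain ⟨q', hq', hsymm⟩ := exists_eq_and_fixed_of_involutive sq.toLinearMap sw.toLinearMap hinv
    (by simpa only [AlgHom.toLinearMap_apply, ← AlgHom.comp_apply, hcomm] using hswap)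
  obtain ⟨r, rfl⟩ := exists_aeval_add_mul_eq_of_aeval_swap_eq hsymm
  refine ⟨r, Eq.trans ?_ hq'⟩
  simp only [sq, AlgHom.toLinearMap_apply, aeval_aeval]
  congr 2; funext i; fin_cases i <;> simp

lemma exists_aeval_sub_sq_eq_of_aeval_eq_self {r : MvPolynomial (Fin 2) K}
    (hr : aeval ![X 0, C (1 / 4) * X 0 ^ 2 - X 1] r = r) :
    ∃ w : MvPolynomial (Fin 2) K, aeval ![X 0, (X 1 - C (1 / 8) * X 0 ^ 2) ^ 2] w = r := by
  let τ : MvPolynomial (Fin 2) K →ₐ[K] MvPolynomial (Fin 2) K :=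
    aeval ![X 0, X 1 + C (1 / 8) * X 0 ^ 2]
  let τ' : MvPolynomial (Fin 2) K →ₐ[K] MvPolynomial (Fin 2) K :=
    aeval ![X 0, X 1 - C (1 / 8) * X 0 ^ 2]
  let σ : MvPolynomial (Fin 2) K →ₐ[K] MvPolynomial (Fin 2) K :=
    aeval ![X 0, C (1 / 4) * X 0 ^ 2 - X 1]
  have hconj : (aeval (Function.update X 1 (-X 1))).comp τ = τ.comp σ := algHom_ext fun i => by
    fin_cases i
    · simp [τ, σ]
    · refine MvPolynomial.funext fun v => ?_
      simp [τ, σ]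
      ring
  have hτ'τ : τ'.comp τ = AlgHom.id K _ := algHom_ext fun i => by
    fin_cases i <;> simp [τ, τ']
  have hu : aeval (Function.update X 1 (-X 1)) (τ r) = τ r := by
    rw [← AlgHom.comp_apply, hconj, AlgHom.comp_apply]
    exact congrArg τ hr
  obtain ⟨w, hw⟩ := exists_aeval_X_pow_eq ![1, 2] (τ r) fun m hm => Fin.forall_fin_two.2
    ⟨one_dvd _, (even_of_aeval_update_neg_X_eq_self (by norm_num) hu hm).two_dvd⟩
  refine ⟨w, ?_⟩
  have : r = τ' (τ r) := by rw [← AlgHom.comp_apply, hτ'τ, AlgHom.id_apply]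
  rw [this, ← hw, aeval_aeval]
  congr 2; funext i; fin_cases i <;> simp

section MacWilliams

variable {c : K}

lemma exists_aeval_eq_and_fixed_of_macWilliams (hc : c ^ 2 = 1 / 2) {p r : MvPolynomial (Fin 2) K}
    (hA : aeval ![C c * X 0 + C c * X 1, C c * X 0 - C c * X 1] p = p)
    (hr : aeval ![X 0 ^ 2 + X 1 ^ 2, X 0 ^ 2 * X 1 ^ 2] r = p) :
    ∃ r' : MvPolynomial (Fin 2) K, aeval ![X 0 ^ 2 + X 1 ^ 2, X 0 ^ 2 * X 1 ^ 2] r' = p ∧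
      aeval ![X 0, C (1 / 4) * X 0 ^ 2 - X 1] r' = r' := by
  let θ : MvPolynomial (Fin 2) K →ₐ[K] MvPolynomial (Fin 2) K :=
    aeval ![X 0 ^ 2 + X 1 ^ 2, X 0 ^ 2 * X 1 ^ 2]
  let σ : MvPolynomial (Fin 2) K →ₐ[K] MvPolynomial (Fin 2) K :=
    aeval ![X 0, C (1 / 4) * X 0 ^ 2 - X 1]
  let α : MvPolynomial (Fin 2) K →ₐ[K] MvPolynomial (Fin 2) K :=
    aeval ![C c * X 0 + C c * X 1, C c * X 0 - C c * X 1]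
  have hcomm : θ.comp σ = α.comp θ := algHom_ext fun i => MvPolynomial.funext fun v => by
    fin_cases i
    · simp [θ, σ, α]
      linear_combination (-2 * (v 0 ^ 2 + v 1 ^ 2)) * hc
    · simp [θ, σ, α]
      linear_combination (-(v 0 ^ 2 - v 1 ^ 2) ^ 2 * (c ^ 2 + 1 / 2)) * hc
  have hσ : Function.Involutive σ := fun r => by
    change σ.comp σ r = AlgHom.id K _ r
    congr 1
    exact algHom_ext fun i => by fin_cases i <;> simp [σ]
  subst hr
  exact exists_eq_and_fixed_of_involutive θ.toLinearMap σ.toLinearMap hσ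
    (by simpa only [AlgHom.toLinearMap_apply, ← AlgHom.comp_apply, hcomm] using hA)

theorem mem_adjoin_of_aeval_eq_self (hc : c ^ 2 = 1 / 2) {p : MvPolynomial (Fin 2) K}
    (hA : aeval ![C c * X 0 + C c * X 1, C c * X 0 - C c * X 1] p = p)
    (hB : aeval ![X 0, -X 1] p = p) :
    p ∈ Algebra.adjoin K
      ({X 0 ^ 2 + X 1 ^ 2, X 0 ^ 2 * X 1 ^ 2 * (X 0 ^ 2 - X 1 ^ 2) ^ 2} :
        Set (MvPolynomial (Fin 2) K)) := by
  have hswap : aeval ![X 1, X 0] p = p := by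
    conv_rhs => rw [← hA, ← hB, ← hA, aeval_aeval, aeval_aeval]
    congr 2
    funext i
    refine MvPolynomial.funext fun v => ?_
    fin_cases i <;> simp <;> linear_combination (-2 * v _) * hc
  have hx : aeval ![-X 0, X 1] p = p := by
    conv_rhs => rw [← hswap, ← hB, ← hswap, aeval_aeval, aeval_aeval]
    congr 2; funext i; fin_cases i <;> simp
  obtain ⟨r, hr⟩ := exists_aeval_sq_add_sq_eq hx hB hswap
  obtain ⟨r', rfl, hr'⟩ := exists_aeval_eq_and_fixed_of_macWilliams hc hA hr
  obtain ⟨w, rfl⟩ := exists_aeval_sub_sq_eq_of_aeval_eq_self hr'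
  set T := Algebra.adjoin K ({X 0 ^ 2 + X 1 ^ 2, X 0 ^ 2 * X 1 ^ 2 * (X 0 ^ 2 - X 1 ^ 2) ^ 2} :
    Set (MvPolynomial (Fin 2) K))
  have hs : X 0 ^ 2 + X 1 ^ 2 ∈ T := Algebra.subset_adjoin (Set.mem_insert _ _)
  have hg : X 0 ^ 2 * X 1 ^ 2 * (X 0 ^ 2 - X 1 ^ 2) ^ 2 ∈ T :=
    Algebra.subset_adjoin (Set.mem_insert_of_mem _ rfl)
  rw [aeval_aeval]
  refine aeval_mem_of_forall_mem (Fin.forall_fin_two.2 ⟨by simpa using hs, ?_⟩) w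
  convert T.sub_mem (T.smul_mem (T.pow_mem hs 4) (1 / 64 : K)) (T.smul_mem hg (1 / 4 : K)) using 1
  exact MvPolynomial.funext fun v => by simp [MvPolynomial.smul_eval]; ring

theorem aeval_eq_self_of_mem_adjoin (hc : c ^ 2 = 1 / 2) {p : MvPolynomial (Fin 2) K}
    (hp : p ∈ Algebra.adjoin K
      ({X 0 ^ 2 + X 1 ^ 2, X 0 ^ 2 * X 1 ^ 2 * (X 0 ^ 2 - X 1 ^ 2) ^ 2} :
        Set (MvPolynomial (Fin 2) K))) :
    aeval ![C c * X 0 + C c * X 1, C c * X 0 - C c * X 1] p = p ∧ aeval ![X 0, -X 1] p = p := by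
  have hfix : ∀ φ : MvPolynomial (Fin 2) K →ₐ[K] MvPolynomial (Fin 2) K,
      Set.EqOn φ (AlgHom.id K _) {X 0 ^ 2 + X 1 ^ 2, X 0 ^ 2 * X 1 ^ 2 * (X 0 ^ 2 - X 1 ^ 2) ^ 2} →
      φ p = p :=
    fun φ h => AlgHom.eqOn_adjoin_iff.2 h hp
  refine ⟨hfix _ ?_, hfix _ ?_⟩ <;> rintro _ (rfl | rfl) <;>
    refine MvPolynomial.funext fun v => ?_ <;> simp
  · linear_combination (2 * (v 0 ^ 2 + v 1 ^ 2)) * hc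
  -- the substitution multiplies `x²y²(x² - y²)²` by `16c⁸ = 1`
  · linear_combination 16 * v 0 ^ 2 * v 1 ^ 2 * (v 0 ^ 2 - v 1 ^ 2) ^ 2 *
      (c ^ 6 + c ^ 4 / 2 + c ^ 2 / 4 + 1 / 8) * hc

theorem aeval_eq_self_and_aeval_eq_self_iff_mem_adjoin (hc : c ^ 2 = 1 / 2)
    {p : MvPolynomial (Fin 2) K} :
    aeval ![C c * X 0 + C c * X 1, C c * X 0 - C c * X 1] p = p ∧ aeval ![X 0, -X 1] p = p ↔
      p ∈ Algebra.adjoin K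
        ({X 0 ^ 2 + X 1 ^ 2, X 0 ^ 2 * X 1 ^ 2 * (X 0 ^ 2 - X 1 ^ 2) ^ 2} :
          Set (MvPolynomial (Fin 2) K)) :=
  ⟨fun h => mem_adjoin_of_aeval_eq_self hc h.1 h.2, aeval_eq_self_of_mem_adjoin hc⟩

end MacWilliams

end TwoVariables

section Dihedral

variable {G : Type*} [Group G] {a b : G}

theorem card_closure_pair_of_sq_eq_one (ha : a ^ 2 = 1) (hb : b ^ 2 = 1)
    (hab : a ∉ Subgroup.zpowers (a * b)) :
    Nat.card (Subgroup.closure {a, b}) = 2 * orderOf (a * b) := by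
  set H := Subgroup.closure {a, b}
  set K := Subgroup.zpowers (a * b)
  have ha_mul : a * a = 1 := by rw [← sq, ha]
  have ha_inv : a⁻¹ = a := inv_eq_of_mul_eq_one_right ha_mul
  have ha_cancel : ∀ t, a * (a * t) = t := fun t => by rw [← mul_assoc, ha_mul, one_mul]
  have haH : a ∈ H := Subgroup.subset_closure (Set.mem_insert a _)
  have hKH : K ≤ H := Subgroup.zpowers_le.2 <|
    H.mul_mem haH (Subgroup.subset_closure (Set.mem_insert_of_mem a rfl))
  have hba : b * a = (a * b)⁻¹ := by
    rw [mul_inv_rev, ha_inv, inv_eq_of_mul_eq_one_right (by rw [← sq, hb] : b * b = 1)]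
  have hconj : ∀ k ∈ K, a * k * a ∈ K := by
    intro k hk
    obtain ⟨n, rfl⟩ := Subgroup.mem_zpowers_iff.1 hk
    have : a * (a * b) ^ n * a = (a * b)⁻¹ ^ n := calc
      a * (a * b) ^ n * a = (a * (a * b) * a⁻¹) ^ n := by rw [conj_zpow, ha_inv]
      _ = (a * b)⁻¹ ^ n := by rw [ha_inv, ha_cancel, hba]
    rw [this]
    exact K.zpow_mem (K.inv_mem (Subgroup.mem_zpowers _)) n
  have hindex : K.relIndex H = 2 := by
    refine Subgroup.relIndex_eq_two_iff_exists_notMem_and.2 ⟨a, haH, hab, fun y hy => ?_⟩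
    induction hy using Subgroup.closure_induction with
    | mem x hx =>
      rcases hx with rfl | rfl
      · left; rw [ha_mul]; exact K.one_mem
      · left; rw [hba]; exact K.inv_mem (Subgroup.mem_zpowers _)
    | one => right; exact K.one_mem
    | mul y z _ _ hy hz =>
      rcases hy with hy | hy <;> rcases hz with hz | hz
      · right; simpa [mul_assoc, ha_mul, ha_cancel] using K.mul_mem hy (hconj _ hz)
      · left; simpa [mul_assoc, ha_mul, ha_cancel] using K.mul_mem hy (hconj _ hz)
      · left; simpa [mul_assoc] using K.mul_mem hy hz
      · right; exact K.mul_mem hy hz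
    | inv y _ hy =>
      rcases hy with hy | hy
      · left; simpa [mul_assoc, ha_inv, ha_cancel] using hconj _ (K.inv_mem hy)
      · right; exact K.inv_mem hy
  calc Nat.card H = (⊥ : Subgroup G).relIndex H := (Subgroup.relIndex_bot_left H).symm
    _ = (⊥ : Subgroup G).relIndex K * K.relIndex H :=
        (Subgroup.relIndex_mul_relIndex ⊥ K H bot_le hKH).symm
    _ = 2 * orderOf (a * b) := by
        rw [Subgroup.relIndex_bot_left, Nat.card_zpowers, hindex, mul_comm]

end Dihedral

section MatAct

lemma matAct_mul (M N : Matrix (Fin 2) (Fin 2) ℝ) (p : MvPolynomial (Fin 2) ℝ) :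
    matAct (M * N) p = matAct N (matAct M p) := by
  simp only [matAct, aeval_aeval]
  congr 2
  funext i
  simp [Fin.sum_univ_two, Matrix.mul_apply]
  ring

lemma matAct_one (p : MvPolynomial (Fin 2) ℝ) : matAct 1 p = p := by
  conv_rhs => rw [← aeval_X_left_apply p]
  simp only [matAct]
  congr 2
  funext i
  fin_cases i <;> simp [Matrix.one_apply]

lemma matAct_of (a b c d : ℝ) (p : MvPolynomial (Fin 2) ℝ) :
    matAct !![a, b; c, d] p = aeval ![C a * X 0 + C b * X 1, C c * X 0 + C d * X 1] p := by
  simp only [matAct]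
  congr 2
  funext i
  fin_cases i <;> simp [Fin.sum_univ_two]

lemma forall_mem_closure_matAct_eq_self_iff {S : Set (Matrix (Fin 2) (Fin 2) ℝ)ˣ}
    {p : MvPolynomial (Fin 2) ℝ} :
    (∀ g ∈ Subgroup.closure S, matAct (g : Matrix (Fin 2) (Fin 2) ℝ) p = p) ↔
      ∀ g ∈ S, matAct (g : Matrix (Fin 2) (Fin 2) ℝ) p = p := by
  refine ⟨fun h g hg => h g (Subgroup.subset_closure hg), fun h g hg => ?_⟩
  induction hg using Subgroup.closure_induction with
  | mem g hg => exact h g hg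
  | one => exact matAct_one p
  | mul g g' _ _ hg hg' => rw [Units.val_mul, matAct_mul, hg, hg']
  | inv g _ hg => conv_lhs => rw [← hg, ← matAct_mul, Units.mul_inv, matAct_one]

end MatAct

section Matrices

variable {K : Type*} [Field K] [CharZero K] {c : K}

lemma notMem_zpowers_mul_of_det_eq_neg_one {n R : Type*} [Fintype n] [DecidableEq n] [CommRing R]
    (hR : (-1 : R) ≠ 1) {a b : GL n R} (ha : (a : Matrix n n R).det = -1)
    (hb : (b : Matrix n n R).det = -1) : a ∉ Subgroup.zpowers (a * b) := by
  intro h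
  have hle : Subgroup.zpowers (a * b) ≤ Matrix.GeneralLinearGroup.det.ker :=
    Subgroup.zpowers_le.2 (by ext; simp [ha, hb])
  exact hR (by simpa [ha] using congrArg Units.val (hle h))

lemma macWilliams_sq (hc : c ^ 2 = 1 / 2) : !![c, c; c, -c] ^ 2 = 1 := by
  rw [sq, Matrix.mul_fin_two, Matrix.one_fin_two]
  ring_nf
  rw [hc]
  norm_num

lemma orderOf_rotation (hc : c ^ 2 = 1 / 2) : orderOf !![c, -c; c, c] = 8 := by
  have h2 : !![c, -c; c, c] ^ 2 = !![0, -1; 1, 0] := by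
    rw [sq, Matrix.mul_fin_two]
    ring_nf
    rw [hc]
    norm_num
  have h4 : !![c, -c; c, c] ^ 4 = -1 := by
    rw [show 4 = 2 * 2 from rfl, pow_mul, h2, sq, Matrix.mul_fin_two]
    ext i j; fin_cases i <;> fin_cases j <;> simp
  refine orderOf_eq_prime_pow (p := 2) (n := 2) ?_ ?_
  · rw [show 2 ^ 2 = 4 from rfl, h4]
    intro h
    have := congrFun (congrFun h 0) 0
    norm_num at this
  · rw [show 2 ^ (2 + 1) = 4 * 2 from rfl, pow_mul, h4]
    norm_num

end Matrices

/-- The real matrix group generated by the MacWilliams matrix `(1/√2)[[1,1],[1,−1]]` and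
`diag(1,−1)` has order 16, and its ring of polynomial invariants is generated by
`x² + y²` and `x²y²(x² − y²)²`. -/
theorem gleason_typeI_group_and_invariants
    (A B : (Matrix (Fin 2) (Fin 2) ℝ)ˣ)
    (hA : (A : Matrix (Fin 2) (Fin 2) ℝ) = (Real.sqrt 2)⁻¹ • !![1, 1; 1, -1])
    (hB : (B : Matrix (Fin 2) (Fin 2) ℝ) = !![1, 0; 0, -1]) :
    Nat.card (Subgroup.closure {A, B} : Subgroup (Matrix (Fin 2) (Fin 2) ℝ)ˣ) = 16 ∧
    {p : MvPolynomial (Fin 2) ℝ |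
        ∀ g ∈ Subgroup.closure ({A, B} : Set (Matrix (Fin 2) (Fin 2) ℝ)ˣ),
          matAct (g : (Matrix (Fin 2) (Fin 2) ℝ)ˣ) p = p}
      = (Algebra.adjoin ℝ
          ({X 0 ^ 2 + X 1 ^ 2,
            X 0 ^ 2 * X 1 ^ 2 * (X 0 ^ 2 - X 1 ^ 2) ^ 2} :
            Set (MvPolynomial (Fin 2) ℝ)) : Subalgebra ℝ (MvPolynomial (Fin 2) ℝ)) := by
  set c := (Real.sqrt 2)⁻¹
  have hc : c ^ 2 = 1 / 2 := by rw [inv_pow, Real.sq_sqrt zero_le_two, one_div]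
  have hA' : (A : Matrix (Fin 2) (Fin 2) ℝ) = !![c, c; c, -c] := by
    rw [hA]; ext i j; fin_cases i <;> fin_cases j <;> simp
  refine ⟨?_, ?_⟩
  · have hA2 : A ^ 2 = 1 := Units.ext <| by
      rw [Units.val_pow_eq_pow_val, hA', macWilliams_sq hc, Units.val_one]
    have hB2 : B ^ 2 = 1 := Units.ext <| by
      rw [Units.val_pow_eq_pow_val, hB, sq, Matrix.mul_fin_two, Units.val_one, Matrix.one_fin_two]
      norm_num
    have hAB : A ∉ Subgroup.zpowers (A * B) := notMem_zpowers_mul_of_det_eq_neg_one (by norm_num)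
      (by rw [hA', Matrix.det_fin_two_of]; linear_combination (-2) * hc)
      (by simp [hB, Matrix.det_fin_two_of])
    have hAB' : !![c, c; c, -c] * !![1, 0; 0, -1] = !![c, -c; c, c] := by
      rw [Matrix.mul_fin_two]; simp
    rw [card_closure_pair_of_sq_eq_one hA2 hB2 hAB, ← orderOf_units, Units.val_mul, hA', hB, hAB',
      orderOf_rotation hc]
  · ext p
    refine forall_mem_closure_matAct_eq_self_iff.trans ?_
    simp only [Set.mem_insert_iff, Set.mem_singleton_iff, forall_eq_or_imp, forall_eq, hA', hB,
      matAct_of, SetLike.mem_coe]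
    refine Iff.trans ?_ (aeval_eq_self_and_aeval_eq_self_iff_mem_adjoin hc)
    simp [sub_eq_add_neg]
end

section
/- The weight enumerator W_{g_{24}}(x,y) = x²⁴ + 759x¹⁶y⁸ + 2576x¹²y¹² + 759x⁸y¹⁶ + y²⁴ is invariant under the MacWilliams transformation (x,y) ↦ ((x+y)/√2, (x−y)/√2) and under y ↦ iy, and moreover W_{g_{24}} = W_{h_8}³ − 42·x⁴y⁴(x⁴−y⁴)⁴ where W_{h_8} = x⁸ + 14x⁴y⁴ + y⁸. -/
/-- The Golay weight enumerator `W_{g₂₄}` is invariant under the MacWilliams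
transformation and under `y ↦ iy`, and `W_{g₂₄} = W_{h₈}³ − 42·x⁴y⁴(x⁴−y⁴)⁴`. -/
theorem golay_weight_enumerator (x y : ℂ) :
    (((x + y) / (Real.sqrt 2 : ℂ)) ^ 24
        + 759 * ((x + y) / (Real.sqrt 2 : ℂ)) ^ 16 * ((x - y) / (Real.sqrt 2 : ℂ)) ^ 8
        + 2576 * ((x + y) / (Real.sqrt 2 : ℂ)) ^ 12 * ((x - y) / (Real.sqrt 2 : ℂ)) ^ 12
        + 759 * ((x + y) / (Real.sqrt 2 : ℂ)) ^ 8 * ((x - y) / (Real.sqrt 2 : ℂ)) ^ 16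
        + ((x - y) / (Real.sqrt 2 : ℂ)) ^ 24
      = x ^ 24 + 759 * x ^ 16 * y ^ 8 + 2576 * x ^ 12 * y ^ 12
          + 759 * x ^ 8 * y ^ 16 + y ^ 24) ∧
    (x ^ 24 + 759 * x ^ 16 * (Complex.I * y) ^ 8
        + 2576 * x ^ 12 * (Complex.I * y) ^ 12
        + 759 * x ^ 8 * (Complex.I * y) ^ 16 + (Complex.I * y) ^ 24
      = x ^ 24 + 759 * x ^ 16 * y ^ 8 + 2576 * x ^ 12 * y ^ 12
          + 759 * x ^ 8 * y ^ 16 + y ^ 24) ∧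
    (x ^ 24 + 759 * x ^ 16 * y ^ 8 + 2576 * x ^ 12 * y ^ 12
        + 759 * x ^ 8 * y ^ 16 + y ^ 24
      = (x ^ 8 + 14 * x ^ 4 * y ^ 4 + y ^ 8) ^ 3
          - 42 * (x ^ 4 * y ^ 4 * (x ^ 4 - y ^ 4) ^ 4)) := by
  have hs2 : (Real.sqrt 2 : ℂ) ^ 2 = 2 := by
    norm_cast
    rw [Real.sq_sqrt]; norm_num
  have hs0 : (Real.sqrt 2 : ℂ) ≠ 0 := by
    intro h
    rw [h] at hs2; norm_num at hs2
  refine ⟨?_, ?_, by ring⟩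
  · have ht : ((Real.sqrt 2 : ℂ))⁻¹ ^ 2 = (2 : ℂ)⁻¹ := by rw [inv_pow, hs2]
    have h24 : ((Real.sqrt 2 : ℂ))⁻¹ ^ 24 = 1 / 4096 := by
      rw [show (24 : ℕ) = 2 * 12 from rfl, pow_mul, ht]; norm_num
    have h16 : ((Real.sqrt 2 : ℂ))⁻¹ ^ 16 = 1 / 256 := by
      rw [show (16 : ℕ) = 2 * 8 from rfl, pow_mul, ht]; norm_num
    have h8 : ((Real.sqrt 2 : ℂ))⁻¹ ^ 8 = 1 / 16 := by
      rw [show (8 : ℕ) = 2 * 4 from rfl, pow_mul, ht]; norm_num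
    have h12 : ((Real.sqrt 2 : ℂ))⁻¹ ^ 12 = 1 / 64 := by
      rw [show (12 : ℕ) = 2 * 6 from rfl, pow_mul, ht]; norm_num
    simp only [div_eq_mul_inv, mul_pow, h24, h16, h12, h8]
    ring
  · have h4 : Complex.I ^ 4 = 1 := Complex.I_pow_four
    have h8 : Complex.I ^ 8 = 1 := by rw [show (8:ℕ) = 4*2 from rfl, pow_mul, h4, one_pow]
    have h12 : Complex.I ^ 12 = 1 := by rw [show (12:ℕ) = 4*3 from rfl, pow_mul, h4, one_pow]
    have h16 : Complex.I ^ 16 = 1 := by rw [show (16:ℕ) = 4*4 from rfl, pow_mul, h4, one_pow]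
    have h24 : Complex.I ^ 24 = 1 := by rw [show (24:ℕ) = 4*6 from rfl, pow_mul, h4, one_pow]
    simp only [mul_pow, h8, h12, h16, h24, one_mul]
end
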